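/- arXiv:1908.05411 — 2 statements merged into one kernel-verified Lean document; each statement's English description precedes it below -/
import Mathlib

section
/- Define the 3×3 real matrices l₁ = [[0,0,0],[0,0,1],[0,-1,0]], l₂ = [[0,0,1],[0,0,0],[-1,0,0]], l₃ = [[0,1,0],[-1,0,0],[0,0,0]]. Let ρ : Matrix(3,3,ℝ) → Matrix(9,9,ℝ) be a function, L : Matrix(3,3,ℝ) →ₗ[ℝ] Matrix(9,9,ℝ) a linear map, and q_α ∈ ℝ⁹. Assume: (i) for every g ∈ SO(3) (i.e. gᵀ * g = 1 and det g = 1), ρ(g) is orthogonal: ρ(g)ᵀ * ρ(g) = 1; (ii) for every g ∈ SO(3) and every skew-symmetric 3×3 matrix a (aᵀ = −a), L(gᵀ * a * g) = ρ(g)ᵀ * L(a) * ρ(g); (iii) ⟨L(l_i) *ᵥ q_α, L(l_j) *ᵥ q_α⟩ = δ_{ij} for all i, j ∈ {1,2,3}, where ⟨·,·⟩ is the standard Euclidean inner product on ℝ⁹. Then for every g ∈ SO(3) and all i, j ∈ {1,2,3}, ⟨L(l_i) *ᵥ (ρ(g) *ᵥ q_α), L(l_j) *ᵥ (ρ(g)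 *ᵥ q_α)⟩ = δ_{ij}. -/
set_option maxHeartbeats 1000000

open Matrix

/-- The standard basis `l₁, l₂, l₃` of the Lie algebra `so(3)`. -/
noncomputable def soThreeBasis : Fin 3 → Matrix (Fin 3) (Fin 3) ℝ :=
  ![!![0, 0, 0; 0, 0, 1; 0, -1, 0],
    !![0, 0, 1; 0, 0, 0; -1, 0, 0],
    !![0, 1, 0; -1, 0, 0; 0, 0, 0]]

/-- Auxiliary sign vector: `soThreeBasis` differs from `-hat(eᵢ)` by these signs. -/
noncomputable def so3sgn : Fin 3 → ℝ := ![1, -1, 1]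

lemma so3_skew (i : Fin 3) : (soThreeBasis i)ᵀ = -(soThreeBasis i) := by
  fin_cases i <;> ext a b <;> fin_cases a <;> fin_cases b <;>
    simp [soThreeBasis, Matrix.vecHead, Matrix.vecTail]

lemma so3_conj (g : Matrix (Fin 3) (Fin 3) ℝ) (hg : gᵀ * g = 1) (hdet : g.det = 1)
    (i : Fin 3) :
    gᵀ * soThreeBasis i * g = ∑ k, (so3sgn i * so3sgn k * g i k) • soThreeBasis k := by
  have hadj : gᵀ = adjugate g := by
    have h1 : g * adjugate g = 1 := by rw [Matrix.mul_adjugate, hdet, one_smul]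
    have h2 : g * gᵀ = 1 := mul_eq_one_comm.mp hg
    exact (left_inv_eq_right_inv (mul_eq_one_comm.mp h1) h2).symm
  have hadj2 := hadj.trans (adjugate_fin_three g)
  rw [← Matrix.ext_iff] at hadj2
  have e00 := hadj2 0 0; have e01 := hadj2 0 1; have e02 := hadj2 0 2
  have e10 := hadj2 1 0; have e11 := hadj2 1 1; have e12 := hadj2 1 2
  have e20 := hadj2 2 0; have e21 := hadj2 2 1; have e22 := hadj2 2 2
  simp only [transpose_apply, Matrix.of_apply, Matrix.cons_val', Matrix.cons_val_zero,
    Matrix.cons_val_one, Matrix.head_cons, Matrix.cons_val_fin_one, Matrix.empty_val',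
    Matrix.cons_val_two, Matrix.tail_cons, Matrix.head_fin_const, Matrix.vecHead,
    Matrix.vecTail, Function.comp, Fin.succ_zero_eq_one, Matrix.cons_val_succ]
    at e00 e01 e02 e10 e11 e12 e20 e21 e22
  clear hadj hadj2
  ring_nf at e00 e01 e02 e10 e11 e12 e20 e21 e22
  fin_cases i <;>
  · ext a b
    fin_cases a <;> fin_cases b <;>
      simp [soThreeBasis, so3sgn, mul_apply, Fin.sum_univ_three, Matrix.sum_apply,
        Matrix.vecHead, Matrix.vecTail, Matrix.cons_val_succ, Fin.succ_zero_eq_one] <;>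
      ring_nf <;> linarith

lemma so3_coeff_orth (g : Matrix (Fin 3) (Fin 3) ℝ) (hg : gᵀ * g = 1) (i j : Fin 3) :
    ∑ k, (so3sgn i * so3sgn k * g i k) * (so3sgn j * so3sgn k * g j k) =
      if i = j then (1 : ℝ) else 0 := by
  have h2 : g * gᵀ = 1 := mul_eq_one_comm.mp hg
  rw [← Matrix.ext_iff] at h2
  have e := h2 i j
  simp only [mul_apply, transpose_apply, Fin.sum_univ_three] at e
  rw [Fin.sum_univ_three]
  fin_cases i <;> fin_cases j <;>
    simp_all [so3sgn, Matrix.one_apply, Fin.sum_univ_three] <;> ring_nf <;> linarith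

/-- If `ρ` is orthogonal on `SO(3)`, `L` intertwines the adjoint action
(`L(gᵀ a g) = ρ(g)ᵀ L(a) ρ(g)` for skew-symmetric `a`), and `{L(lᵢ) qα}` is orthonormal, then
`{L(lᵢ) (ρ(g) qα)}` is orthonormal for every `g ∈ SO(3)`. -/
theorem isometry_condition_on_orbit
    (ρ : Matrix (Fin 3) (Fin 3) ℝ → Matrix (Fin 9) (Fin 9) ℝ)
    (L : Matrix (Fin 3) (Fin 3) ℝ →ₗ[ℝ] Matrix (Fin 9) (Fin 9) ℝ)
    (qα : Fin 9 → ℝ)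
    (hρ_orth : ∀ g : Matrix (Fin 3) (Fin 3) ℝ, gᵀ * g = 1 → g.det = 1 →
      (ρ g)ᵀ * ρ g = 1)
    (hL_adj : ∀ g : Matrix (Fin 3) (Fin 3) ℝ, gᵀ * g = 1 → g.det = 1 →
      ∀ a : Matrix (Fin 3) (Fin 3) ℝ, aᵀ = -a →
        L (gᵀ * a * g) = (ρ g)ᵀ * L a * ρ g)
    (h_orthonormal : ∀ i j : Fin 3,
      (L (soThreeBasis i) *ᵥ qα) ⬝ᵥ (L (soThreeBasis j) *ᵥ qα) =
        if i = j then (1 : ℝ) else 0) :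
    ∀ g : Matrix (Fin 3) (Fin 3) ℝ, gᵀ * g = 1 → g.det = 1 →
      ∀ i j : Fin 3,
        (L (soThreeBasis i) *ᵥ (ρ g *ᵥ qα)) ⬝ᵥ (L (soThreeBasis j) *ᵥ (ρ g *ᵥ qα)) =
          if i = j then (1 : ℝ) else 0 := by
  intro g hg hdet i j
  have hP : (ρ g)ᵀ * ρ g = 1 := hρ_orth g hg hdet
  have hPP : ρ g * (ρ g)ᵀ = 1 := mul_eq_one_comm.mp hP
  have key : ∀ k : Fin 3, L (soThreeBasis k) *ᵥ (ρ g *ᵥ qα)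
      = ρ g *ᵥ (L (gᵀ * soThreeBasis k * g) *ᵥ qα) := by
    intro k
    rw [hL_adj g hg hdet _ (so3_skew k), Matrix.mulVec_mulVec, Matrix.mulVec_mulVec,
      ← Matrix.mul_assoc, ← Matrix.mul_assoc, hPP, Matrix.one_mul]
  have dotP : ∀ u v : Fin 9 → ℝ, (ρ g *ᵥ u) ⬝ᵥ (ρ g *ᵥ v) = u ⬝ᵥ v := by
    intro u v
    rw [Matrix.dotProduct_mulVec, Matrix.vecMul_mulVec, hP, Matrix.vecMul_one]
  rw [key i, key j, dotP, so3_conj g hg hdet i, so3_conj g hg hdet j, map_sum, map_sum]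
  simp only [_root_.map_smul]
  have expand : ∀ (c d : Fin 3 → ℝ),
      ((∑ k, c k • L (soThreeBasis k)) *ᵥ qα) ⬝ᵥ ((∑ m, d m • L (soThreeBasis m)) *ᵥ qα)
        = ∑ k, c k * d k := by
    intro c d
    simp only [Fin.sum_univ_three, Matrix.add_mulVec, Matrix.smul_mulVec,
      add_dotProduct, dotProduct_add, smul_dotProduct,
      dotProduct_smul, smul_eq_mul, h_orthonormal]
    norm_num [Fin.ext_iff]
    ring
  rw [expand, so3_coeff_orth g hg i j]
end

section
/- Let n be a positive integer, y ∈ ℝⁿ, and (P_i)_{i∈ι} a family of symmetric (n+1)×(n+1) real matrices. Define Y as the (n+1)×(n+1) block matrix ((‖y‖², −yᵀ), (−y, I)), and for q ∈ ℝⁿ write v(q) = (1, q) ∈ ℝⁿ⁺¹. Suppose Q* is a positive semidefinite (n+1)×(n+1) matrix with Q*₀₀ = 1 and trace(P_i * Q*) = 0 for all i, which minimizes trace(Y * Q) over all positive semidefinite Q with Q₀₀ = 1 and trace(P_i * Q) = 0 for all i, and suppose rank(Q*) = 1. Then there exists q* ∈ ℝⁿ with Q* = v(q*)v(q*)ᵀ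 such that q* lies in the variety (v(q*)ᵀ P_i v(q*) = 0 for all i) and q* is a globally optimal solution of the projection problem: ‖q* − y‖ ≤ ‖q − y‖ for every q ∈ ℝⁿ with v(q)ᵀ P_i v(q) = 0 for all i. That is, exact (rank-one) recovery in the semidefinite relaxation yields the globally closest point of the variety to y. -/
/-!
A symmetric rank-one `Q*` with `Q*₀₀ = 1` is the outer product `v(q*)v(q*)ᵀ` of its first
column. On such lifts the SDP is the original problem: `trace(P * v(q)v(q)ᵀ) = v(q)ᵀ P v(q)` and
`trace(Y * v(q)v(q)ᵀ) = ‖q − y‖²`. So `q*` lies on the variety, and each point `q` of the variety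
gives a feasible `v(q)v(q)ᵀ`, whence `‖q* − y‖² ≤ ‖q − y‖²` by minimality of `Q*`.
-/

open Matrix

/-- `v(q) = (1, q) ∈ ℝⁿ⁺¹`: the vector with first coordinate 1 followed by `q`. -/
def liftVec {n : ℕ} (q : EuclideanSpace ℝ (Fin n)) : Fin (n + 1) → ℝ :=
  Fin.cons 1 (fun j => q j)

/-- The SDP cost matrix `Y = ((‖y‖², −yᵀ), (−y, I))`. -/
noncomputable def sdpCost {n : ℕ} (y : EuclideanSpace ℝ (Fin n)) :
    Matrix (Fin (n + 1)) (Fin (n + 1)) ℝ :=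
  Fin.cons (Fin.cons (‖y‖ ^ 2) (fun j => -(y j)))
    (fun i => Fin.cons (-(y i)) (fun j => if i = j then (1 : ℝ) else 0))

namespace Matrix

variable {m n K : Type*}

theorem mul_eq_mul_of_rank_le_one [Fintype n] [Field K] {A : Matrix m n K} (hA : A.rank ≤ 1)
    (i k : m) (j l : n) : A i j * A k l = A i l * A k j := by
  classical
  obtain ⟨v, hv⟩ := finrank_le_one_iff.mp hA
  have hcol : ∀ j, ∃ c : K, ∀ i, A i j = c * (v : m → K) i := fun j => by
    obtain ⟨c, hc⟩ := hv ⟨A *ᵥ Pi.single j 1, LinearMap.mem_range_self A.mulVecLin _⟩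
    refine ⟨c, fun i => ?_⟩
    simpa [mulVec_single_one] using (congrFun (congrArg Subtype.val hc) i).symm
  choose c hc using hcol
  simp only [hc]
  ring

theorem IsSymm.eq_vecMulVec_of_rank_le_one [Fintype m] [Field K] {A : Matrix m m K}
    (hS : A.IsSymm) (hA : A.rank ≤ 1) {i₀ : m} (h : A i₀ i₀ = 1) :
    A = vecMulVec (fun i => A i i₀) (fun i => A i i₀) := by
  ext i j
  simpa [vecMulVec_apply, h, hS.apply i₀ j] using mul_eq_mul_of_rank_le_one hA i i₀ j i₀

theorem trace_mul_vecMulVec_self [Fintype m] {R : Type*} [CommSemiring R] (M : Matrix m m R)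
    (u : m → R) : (M * vecMulVec u u).trace = u ⬝ᵥ (M *ᵥ u) := by
  rw [mul_vecMulVec, trace_vecMulVec, dotProduct_comm]

theorem posSemidef_vecMulVec_self [Fintype m] {R : Type*} [CommRing R] [PartialOrder R]
    [StarRing R] [TrivialStar R] [StarOrderedRing R] (u : m → R) :
    (vecMulVec u u).PosSemidef := by
  simpa using posSemidef_vecMulVec_self_star u

end Matrix

section Lift

variable {n : ℕ}

theorem exists_liftVec_eq {u : Fin (n + 1) → ℝ} (h : u 0 = 1) :
    ∃ q : EuclideanSpace ℝ (Fin n), liftVec q = u :=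
  ⟨WithLp.toLp 2 (Fin.tail u), by rw [← Fin.cons_self_tail u, h]; rfl⟩

theorem vecMulVec_liftVec_zero_zero (q : EuclideanSpace ℝ (Fin n)) :
    vecMulVec (liftVec q) (liftVec q) 0 0 = 1 := by
  simp [vecMulVec_apply, liftVec]

theorem sdpCost_mulVec_liftVec (y q : EuclideanSpace ℝ (Fin n)) :
    sdpCost y *ᵥ liftVec q = Fin.cons (‖y‖ ^ 2 - inner ℝ y q) (fun i => q i - y i) := by
  ext i
  refine Fin.cases ?_ (fun i => ?_) i
  · simp [sdpCost, liftVec, mulVec, dotProduct, Fin.sum_univ_succ, inner, sub_eq_add_neg,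
      mul_comm]
  · simp [sdpCost, liftVec, mulVec, dotProduct, Fin.sum_univ_succ, sub_eq_add_neg, add_comm]

theorem trace_sdpCost_mul_vecMulVec_liftVec (y q : EuclideanSpace ℝ (Fin n)) :
    (sdpCost y * vecMulVec (liftVec q) (liftVec q)).trace = ‖q - y‖ ^ 2 := by
  have htail : (fun i => q i) ⬝ᵥ (fun i => q i - y i) = inner ℝ (q - y) q := by
    simp [dotProduct, PiLp.inner_apply]
  rw [trace_mul_vecMulVec_self, sdpCost_mulVec_liftVec, liftVec, ← vecCons, ← vecCons,
    cons_dotProduct_cons, htail, inner_sub_left, real_inner_self_eq_norm_sq, real_inner_comm,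
    norm_sub_sq_real]
  ring

end Lift

theorem sdp_rank_one_exact_recovery_general
    (n : ℕ)
    (y : EuclideanSpace ℝ (Fin n))
    {ι : Type*} (P : ι → Matrix (Fin (n + 1)) (Fin (n + 1)) ℝ)
    (Qstar : Matrix (Fin (n + 1)) (Fin (n + 1)) ℝ)
    (hQstar_psd : Qstar.PosSemidef)
    (hQstar_corner : Qstar 0 0 = 1)
    (hQstar_feas : ∀ i, (P i * Qstar).trace = 0)
    (hQstar_min : ∀ Q : Matrix (Fin (n + 1)) (Fin (n + 1)) ℝ,
      Q.PosSemidef → Q 0 0 = 1 → (∀ i, (P i * Q).trace = 0) →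
        (sdpCost y * Qstar).trace ≤ (sdpCost y * Q).trace)
    (hQstar_rank : Qstar.rank = 1) :
    ∃ qstar : EuclideanSpace ℝ (Fin n),
      Qstar = Matrix.vecMulVec (liftVec qstar) (liftVec qstar) ∧
      (∀ i, liftVec qstar ⬝ᵥ (P i *ᵥ liftVec qstar) = 0) ∧
      (∀ q : EuclideanSpace ℝ (Fin n),
        (∀ i, liftVec q ⬝ᵥ (P i *ᵥ liftVec q) = 0) →
          ‖qstar - y‖ ≤ ‖q - y‖) := by
  have hsymm : Qstar.IsSymm := isHermitian_iff_isSymm.mp hQstar_psd.isHermitian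
  obtain ⟨qstar, hlift⟩ := exists_liftVec_eq (u := fun i => Qstar i 0) hQstar_corner
  have hQ : Qstar = vecMulVec (liftVec qstar) (liftVec qstar) := by
    rw [hlift]
    exact hsymm.eq_vecMulVec_of_rank_le_one hQstar_rank.le hQstar_corner
  refine ⟨qstar, hQ, fun i => ?_, fun q hq => ?_⟩
  · rw [← trace_mul_vecMulVec_self, ← hQ]
    exact hQstar_feas i
  · have hle := hQstar_min _ (posSemidef_vecMulVec_self _) (vecMulVec_liftVec_zero_zero q)
      (fun i => (trace_mul_vecMulVec_self _ _).trans (hq i))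
    rw [hQ, trace_sdpCost_mul_vecMulVec_liftVec, trace_sdpCost_mul_vecMulVec_liftVec] at hle
    exact (pow_le_pow_iff_left₀ (norm_nonneg _) (norm_nonneg _) two_ne_zero).mp hle

/-- If the optimal solution `Q*` of the SDP relaxation of Euclidean projection
onto the quadratic variety has rank one, then `Q* = v(q*)v(q*)ᵀ` where `q*` lies on the variety
and is a globally closest point of the variety to `y` (exact recovery). -/
theorem sdp_rank_one_exact_recovery
    (n : ℕ) (hn : 0 < n)
    (y : EuclideanSpace ℝ (Fin n))
    {ι : Type*} (P : ι → Matrix (Fin (n + 1)) (Fin (n + 1)) ℝ)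
    (hP : ∀ i, (P i).IsSymm)
    (Qstar : Matrix (Fin (n + 1)) (Fin (n + 1)) ℝ)
    (hQstar_psd : Qstar.PosSemidef)
    (hQstar_corner : Qstar 0 0 = 1)
    (hQstar_feas : ∀ i, (P i * Qstar).trace = 0)
    (hQstar_min : ∀ Q : Matrix (Fin (n + 1)) (Fin (n + 1)) ℝ,
      Q.PosSemidef → Q 0 0 = 1 → (∀ i, (P i * Q).trace = 0) →
        (sdpCost y * Qstar).trace ≤ (sdpCost y * Q).trace)
    (hQstar_rank : Qstar.rank = 1) :
    ∃ qstar : EuclideanSpace ℝ (Fin n),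
      Qstar = Matrix.vecMulVec (liftVec qstar) (liftVec qstar) ∧
      (∀ i, liftVec qstar ⬝ᵥ (P i *ᵥ liftVec qstar) = 0) ∧
      (∀ q : EuclideanSpace ℝ (Fin n),
        (∀ i, liftVec q ⬝ᵥ (P i *ᵥ liftVec q) = 0) →
          ‖qstar - y‖ ≤ ‖q - y‖) :=
  sdp_rank_one_exact_recovery_general n y P Qstar hQstar_psd hQstar_corner hQstar_feas hQstar_min
    hQstar_rank
end
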